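/- Let p₁: E ⥤ D and p₂: D ⥤ S be functors between categories such that: (1) p₂ ∘ p₁ is a Grothendieck opfibration; (2) p₁ maps every morphism that is strongly coCartesian with respect to p₂ ∘ p₁ to a morphism that is strongly coCartesian with respect to p₂; (3) for every object s of S the induced functor between fibers (p₁)_s: E_s ⥤ D_s is a Grothendieck opfibration; (4) for every morphism f: s → t in S, every commutative square in D consisting of a morphism τ: X → Y lying over 𝟙_s, morphisms ξ: X → G and ξ': Y → H lying over f that are strongly coCartesian with respect to p₂, and a morphism χ: G → H lying over 𝟙_t with χ ∘ ξ = ξ' ∘ τ, and every commutative square in E lying over it consisting of a morphism κ over ξ and a morphism κ' over ξ' that are both strongly coCartesian with respect to p₂ ∘ p₁, a morphism μ over τ that is strongly coCartesian with respect to (p₁)_s: E_s ⥤ D_s, and a morphism ν over χ with ν ∘ κ = κ' ∘ μ, the morphism ν is strongly coCartesian with respect to (p₁)_t: E_t ⥤ D_t. Then p₁ is a Grothendieck opfibration. -/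

import Mathlib

open CategoryTheory

universe v₁ v₂ v₃ u₁ u₂ u₃

namespace PaperFib

/-- A morphism `ξ : x ⟶ y` is strongly coCartesian with respect to `p : E ⥤ S` if for every
morphism `h : x ⟶ z` and every factorization `p(h) = v ∘ p(ξ)` there is a unique morphism
`w : y ⟶ z` with `p(w) = v` and `w ∘ ξ = h`. -/
def IsStronglyCocartesian {E : Type u₁} {S : Type u₂} [Category.{v₁} E] [Category.{v₂} S]
    (p : E ⥤ S) {x y : E} (ξ : x ⟶ y) : Prop :=
  ∀ (z : E) (h : x ⟶ z) (v : p.obj y ⟶ p.obj z), p.map h = p.map ξ ≫ v →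
    ∃! w : y ⟶ z, p.map w = v ∧ ξ ≫ w = h

/-- A morphism `ξ : x ⟶ y` is strongly Cartesian with respect to `p : E ⥤ S` if for every
morphism `h : z ⟶ y` and every factorization `p(h) = p(ξ) ∘ v` there is a unique morphism
`w : z ⟶ x` with `p(w) = v` and `ξ ∘ w = h`. -/
def IsStronglyCartesian {E : Type u₁} {S : Type u₂} [Category.{v₁} E] [Category.{v₂} S]
    (p : E ⥤ S) {x y : E} (ξ : x ⟶ y) : Prop :=
  ∀ (z : E) (h : z ⟶ y) (v : p.obj z ⟶ p.obj x), p.map h = v ≫ p.map ξ →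
    ∃! w : z ⟶ x, p.map w = v ∧ w ≫ ξ = h

/-- `p : E ⥤ S` is a Grothendieck opfibration if every morphism `p(x) ⟶ s` admits a strongly
coCartesian lift starting at `x`. -/
def IsGrothendieckOpfibration {E : Type u₁} {S : Type u₂} [Category.{v₁} E] [Category.{v₂} S]
    (p : E ⥤ S) : Prop :=
  ∀ (x : E) (s : S) (f : p.obj x ⟶ s), ∃ (y : E) (ξ : x ⟶ y) (hy : p.obj y = s),
    p.map ξ = f ≫ eqToHom hy.symm ∧ IsStronglyCocartesian p ξ

/-- `p : E ⥤ S` is a Grothendieck fibration if every morphism `s ⟶ p(y)` admits a strongly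
Cartesian lift ending at `y`. -/
def IsGrothendieckFibration {E : Type u₁} {S : Type u₂} [Category.{v₁} E] [Category.{v₂} S]
    (p : E ⥤ S) : Prop :=
  ∀ (y : E) (s : S) (f : s ⟶ p.obj y), ∃ (x : E) (ξ : x ⟶ y) (hx : p.obj x = s),
    p.map ξ = eqToHom hx ≫ f ∧ IsStronglyCartesian p ξ

section Fiber

variable {E : Type u₁} {S : Type u₂} [Category.{v₁} E] [Category.{v₂} S]

/-- The fiber of `p : E ⥤ S` over `s`: objects of `E` mapping to `s` and morphisms mapping
to `𝟙 s`. -/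
def Fiber (p : E ⥤ S) (s : S) : Type u₁ := {x : E // p.obj x = s}

instance Fiber.category (p : E ⥤ S) (s : S) : Category (Fiber p s) where
  Hom x y := {f : x.1 ⟶ y.1 // p.map f = eqToHom (x.2.trans y.2.symm)}
  id x := ⟨𝟙 _, by simp⟩
  comp f g := ⟨f.1 ≫ g.1, by rw [Functor.map_comp, f.2, g.2, eqToHom_trans]⟩
  id_comp f := Subtype.ext (Category.id_comp f.1)
  comp_id f := Subtype.ext (Category.comp_id f.1)
  assoc f g h := Subtype.ext (Category.assoc f.1 g.1 h.1)

end Fiber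

variable {E : Type u₁} {D : Type u₂} {S : Type u₃}
variable [Category.{v₁} E] [Category.{v₂} D] [Category.{v₃} S]

/-- The functor `(p₁)_s : E_s ⥤ D_s` induced by `p₁` between the fibers over `s` of
`p₂ ∘ p₁` and of `p₂`. -/
def fiberFunctor (p₁ : E ⥤ D) (p₂ : D ⥤ S) (s : S) : Fiber (p₁ ⋙ p₂) s ⥤ Fiber p₂ s where
  obj x := ⟨p₁.obj x.1, x.2⟩
  map f := ⟨p₁.map f.1, f.2⟩
  map_id x := Subtype.ext (p₁.map_id x.1)
  map_comp f g := Subtype.ext (p₁.map_comp f.1 g.1)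

/-!
A lift of `f : p₁ x ⟶ d` is built in two stages: first a `p₂ ∘ p₁`-coCartesian lift `κ` of
`p₂ f`, whose image is `p₂`-coCartesian, so that `f = p₁ κ ≫ χ` with `χ` vertical; then a
coCartesian lift `ν` of `χ` for the functor between the fibers. Both `κ` and `ν` are
`p₁`-coCartesian, hence so is `κ ≫ ν`. For `κ` this is a formal cancellation property. For `ν`,
a test morphism into a fiber over another base object `t'` is handled by transporting the
whole situation to `t'` along coCartesian lifts: there the comparison morphism between the
transported objects is fiberwise coCartesian by the square condition, and factorizations
through it pull back to factorizations through `ν`.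
-/

section StronglyCocartesian

variable {C : Type u₁} {B : Type u₂} [Category.{v₁} C] [Category.{v₂} B] {p : C ⥤ B}

theorem IsStronglyCocartesian.hom_ext {x y z : C} {ξ : x ⟶ y} (hξ : IsStronglyCocartesian p ξ)
    {w w' : y ⟶ z} (hp : p.map w = p.map w') (hc : ξ ≫ w = ξ ≫ w') : w = w' := by
  obtain ⟨u, -, hu⟩ := hξ z (ξ ≫ w) (p.map w) (p.map_comp ξ w)
  exact (hu w ⟨rfl, rfl⟩).trans (hu w' ⟨hp.symm, hc.symm⟩).symm

theorem IsStronglyCocartesian.comp {x y z : C} {ξ : x ⟶ y} {η : y ⟶ z}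
    (hξ : IsStronglyCocartesian p ξ) (hη : IsStronglyCocartesian p η) :
    IsStronglyCocartesian p (ξ ≫ η) := by
  intro c h v hv
  obtain ⟨w₁, ⟨hw₁p, hw₁c⟩, hw₁u⟩ := hξ c h (p.map η ≫ v) (by rw [hv, p.map_comp_assoc])
  obtain ⟨w₂, ⟨hw₂p, hw₂c⟩, hw₂u⟩ := hη c w₁ v hw₁p
  refine ⟨w₂, ⟨hw₂p, by rw [Category.assoc, hw₂c, hw₁c]⟩, fun w' ⟨hp, hc⟩ => hw₂u w' ⟨hp, ?_⟩⟩
  exact hw₁u (η ≫ w') ⟨by rw [p.map_comp, hp], by rw [← Category.assoc, hc]⟩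

theorem existsUnique_lift_of_square {g g' y y' z : C} {ν : g ⟶ y} {κg : g ⟶ g'} {κy : y ⟶ y'}
    {ν' : g' ⟶ y'} (sq : κg ≫ ν' = ν ≫ κy) (hκg : IsStronglyCocartesian p κg)
    (hκy : IsStronglyCocartesian p κy) (h : g ⟶ z) (v' : p.obj y' ⟶ p.obj z)
    (hh : p.map h = p.map ν ≫ p.map κy ≫ v')
    (hν' : ∀ w : g' ⟶ z, p.map w = p.map ν' ≫ v' → ∃! w' : y' ⟶ z, p.map w' = v' ∧ ν' ≫ w' = w) :
    ∃! w : y ⟶ z, p.map w = p.map κy ≫ v' ∧ ν ≫ w = h := by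
  obtain ⟨w, ⟨hwp, hwc⟩, hwu⟩ := hκg z h (p.map ν' ≫ v')
    (by rw [hh, ← p.map_comp_assoc, ← sq, p.map_comp_assoc])
  obtain ⟨w', ⟨hw'p, hw'c⟩, hw'u⟩ := hν' w hwp
  refine ⟨κy ≫ w', ⟨by rw [p.map_comp, hw'p], by rw [← Category.assoc, ← sq, Category.assoc,
    hw'c, hwc]⟩, ?_⟩
  rintro u ⟨hup, huc⟩
  obtain ⟨u', ⟨hu'p, hu'c⟩, -⟩ := hκy z u v' hup
  have : u' = w' := hw'u u' ⟨hu'p, hwu _ ⟨by rw [p.map_comp, hu'p], by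
    rw [← Category.assoc, sq, Category.assoc, hu'c, huc]⟩⟩
  rw [← hu'c, this]

end StronglyCocartesian

section Composite

variable {p₁ : E ⥤ D} {p₂ : D ⥤ S}

theorem isStronglyCocartesian_of_comp {x y : E} {κ : x ⟶ y}
    (hκ : IsStronglyCocartesian (p₁ ⋙ p₂) κ) (hκ₂ : IsStronglyCocartesian p₂ (p₁.map κ)) :
    IsStronglyCocartesian p₁ κ := by
  intro z h v hv
  obtain ⟨w, ⟨hwp, hwc⟩, hwu⟩ := hκ z h (p₂.map v) (by
    rw [Functor.comp_map, Functor.comp_map, hv, p₂.map_comp])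
  refine ⟨w, ⟨?_, hwc⟩, fun w' ⟨hp, hc⟩ => hwu w' ⟨by rw [Functor.comp_map, hp], hc⟩⟩
  exact hκ₂.hom_ext hwp (by rw [← p₁.map_comp, hwc, hv])

theorem existsUnique_lift_of_isStronglyCocartesian_fiberFunctor {t : S}
    {a b : Fiber (p₁ ⋙ p₂) t} {ν : a ⟶ b} (hν : IsStronglyCocartesian (fiberFunctor p₁ p₂ t) ν)
    (z : Fiber (p₁ ⋙ p₂) t) (v : p₁.obj b.1 ⟶ p₁.obj z.1)
    (hv : p₂.map v = eqToHom (b.2.trans z.2.symm)) (w : a.1 ⟶ z.1)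
    (hw : p₁.map w = p₁.map ν.1 ≫ v) : ∃! w' : b.1 ⟶ z.1, p₁.map w' = v ∧ ν.1 ≫ w' = w := by
  have hwv : (p₁ ⋙ p₂).map w = eqToHom (a.2.trans z.2.symm) := by
    rw [Functor.comp_map, hw, p₂.map_comp, ← Functor.comp_map, ν.2, hv, eqToHom_trans]
  obtain ⟨w', ⟨hw'p, hw'c⟩, hw'u⟩ := hν z ⟨w, hwv⟩ ⟨v, hv⟩ (Subtype.ext hw)
  refine ⟨w'.1, ⟨congrArg Subtype.val hw'p, congrArg Subtype.val hw'c⟩, ?_⟩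
  rintro u ⟨hup, huc⟩
  have huv : (p₁ ⋙ p₂).map u = eqToHom (b.2.trans z.2.symm) := by rw [Functor.comp_map, hup, hv]
  exact congrArg Subtype.val (hw'u ⟨u, huv⟩ ⟨Subtype.ext hup, Subtype.ext huc⟩)

end Composite

section Lifts

variable (p₁ : E ⥤ D) (p₂ : D ⥤ S)

theorem exists_lift_of_isGrothendieckOpfibration_fiberFunctor {s : S}
    (hs : IsGrothendieckOpfibration (fiberFunctor p₁ p₂ s)) (g : Fiber (p₁ ⋙ p₂) s) {d : D}
    (hd : p₂.obj d = s) (χ : p₁.obj g.1 ⟶ d) (hχ : p₂.map χ = eqToHom (g.2.trans hd.symm)) :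
    ∃ (y : Fiber (p₁ ⋙ p₂) s) (ν : g ⟶ y) (hy : p₁.obj y.1 = d),
      p₁.map ν.1 = χ ≫ eqToHom hy.symm ∧ IsStronglyCocartesian (fiberFunctor p₁ p₂ s) ν := by
  obtain ⟨y, ν, hy, hν, Hν⟩ := hs g ⟨d, hd⟩ ⟨χ, hχ⟩
  have eqToHom_val : ∀ {a b : Fiber p₂ s} (e : a = b),
      (eqToHom e).1 = eqToHom (congrArg Subtype.val e) := by
    rintro _ _ rfl
    rfl
  exact ⟨y, ν, congrArg Subtype.val hy, (congrArg Subtype.val hν).trans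
    (congrArg (χ ≫ ·) (eqToHom_val hy.symm)), Hν⟩

theorem isStronglyCocartesian_of_isStronglyCocartesian_fiberFunctor
    (h1 : IsGrothendieckOpfibration (p₁ ⋙ p₂))
    (h2 : ∀ {x y : E} (ξ : x ⟶ y), IsStronglyCocartesian (p₁ ⋙ p₂) ξ →
        IsStronglyCocartesian p₂ (p₁.map ξ))
    (h4 : ∀ {s t : S} (f : s ⟶ t)
        (a b : Fiber (p₁ ⋙ p₂) s) (g h : Fiber (p₁ ⋙ p₂) t)
        (μ : a ⟶ b) (κ : a.1 ⟶ g.1) (κ' : b.1 ⟶ h.1) (ν : g ⟶ h),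
        κ ≫ ν.1 = μ.1 ≫ κ' →
        IsStronglyCocartesian (p₁ ⋙ p₂) κ →
        IsStronglyCocartesian (p₁ ⋙ p₂) κ' →
        (p₁ ⋙ p₂).map κ = eqToHom a.2 ≫ f ≫ eqToHom g.2.symm →
        (p₁ ⋙ p₂).map κ' = eqToHom b.2 ≫ f ≫ eqToHom h.2.symm →
        IsStronglyCocartesian p₂ (p₁.map κ) →
        IsStronglyCocartesian p₂ (p₁.map κ') →
        IsStronglyCocartesian (fiberFunctor p₁ p₂ s) μ →
        IsStronglyCocartesian (fiberFunctor p₁ p₂ t) ν)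
    {t : S} {g y : Fiber (p₁ ⋙ p₂) t} {ν : g ⟶ y}
    (hν : IsStronglyCocartesian (fiberFunctor p₁ p₂ t) ν) : IsStronglyCocartesian p₁ ν.1 := by
  intro z h v hv
  let f : t ⟶ p₂.obj (p₁.obj z) := eqToHom y.2.symm ≫ p₂.map v
  obtain ⟨g', κg, hg', hκg, Hκg⟩ := h1 g.1 _ (eqToHom g.2 ≫ f)
  obtain ⟨y', κy, hy', hκy, Hκy⟩ := h1 y.1 _ (eqToHom y.2 ≫ f)
  obtain ⟨v', ⟨hv'p, hv'c⟩, -⟩ := h2 κy Hκy (p₁.obj z) v (eqToHom hy') (by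
    rw [← Functor.comp_map, hκy]; simp [f])
  obtain ⟨ν', ⟨hν'p, hν'c⟩, -⟩ := Hκg y' (ν.1 ≫ κy) (eqToHom (hg'.trans hy'.symm)) (by
    rw [Functor.map_comp, ν.2, hκy, hκg]; simp)
  have Hν' := h4 f g y ⟨g', hg'⟩ ⟨y', hy'⟩ ν κg κy ⟨ν', hν'p⟩ hν'c Hκg Hκy
    (by rw [hκg, Category.assoc]) (by rw [hκy, Category.assoc]) (h2 κg Hκg) (h2 κy Hκy) hν
  rw [← hv'c]
  exact existsUnique_lift_of_square hν'c (isStronglyCocartesian_of_comp Hκg (h2 κg Hκg))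
    (isStronglyCocartesian_of_comp Hκy (h2 κy Hκy)) h v' (by rw [hv, hv'c])
    (existsUnique_lift_of_isStronglyCocartesian_fiberFunctor Hν' ⟨z, rfl⟩ v' hv'p)

end Lifts

/-- **Statement 14.** A criterion for `p₁` to be a Grothendieck opfibration, given that
`p₂ ∘ p₁` is one. -/
theorem isGrothendieckOpfibration_of_comp
    (p₁ : E ⥤ D) (p₂ : D ⥤ S)
    (h1 : IsGrothendieckOpfibration (p₁ ⋙ p₂))
    (h2 : ∀ {x y : E} (ξ : x ⟶ y), IsStronglyCocartesian (p₁ ⋙ p₂) ξ →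
        IsStronglyCocartesian p₂ (p₁.map ξ))
    (h3 : ∀ s : S, IsGrothendieckOpfibration (fiberFunctor p₁ p₂ s))
    (h4 : ∀ {s t : S} (f : s ⟶ t)
        (a b : Fiber (p₁ ⋙ p₂) s) (g h : Fiber (p₁ ⋙ p₂) t)
        (μ : a ⟶ b) (κ : a.1 ⟶ g.1) (κ' : b.1 ⟶ h.1) (ν : g ⟶ h),
        -- the square in `E` commutes
        κ ≫ ν.1 = μ.1 ≫ κ' →
        -- `κ` and `κ'` are strongly coCartesian w.r.t. `p₂ ∘ p₁` and lie over `f`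
        IsStronglyCocartesian (p₁ ⋙ p₂) κ →
        IsStronglyCocartesian (p₁ ⋙ p₂) κ' →
        (p₁ ⋙ p₂).map κ = eqToHom a.2 ≫ f ≫ eqToHom g.2.symm →
        (p₁ ⋙ p₂).map κ' = eqToHom b.2 ≫ f ≫ eqToHom h.2.symm →
        -- the image morphisms `ξ = p₁(κ)`, `ξ' = p₁(κ')` are strongly coCartesian w.r.t. `p₂`
        IsStronglyCocartesian p₂ (p₁.map κ) →
        IsStronglyCocartesian p₂ (p₁.map κ') →
        -- `μ` is strongly coCartesian w.r.t. the induced functor between the fibers over `s`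
        IsStronglyCocartesian (fiberFunctor p₁ p₂ s) μ →
        -- then `ν` is strongly coCartesian w.r.t. the induced functor between the fibers
        -- over `t`
        IsStronglyCocartesian (fiberFunctor p₁ p₂ t) ν) :
    IsGrothendieckOpfibration p₁ := by
  intro x d f
  obtain ⟨g, κ, hg, hκ, Hκ⟩ := h1 x (p₂.obj d) (p₂.map f)
  obtain ⟨χ, ⟨hχp, hχc⟩, -⟩ := h2 κ Hκ d f (eqToHom hg) (by rw [← Functor.comp_map, hκ]; simp)
  obtain ⟨y, ν, hy, hν, Hν⟩ :=
    exists_lift_of_isGrothendieckOpfibration_fiberFunctor p₁ p₂ (h3 _) ⟨g, hg⟩ rfl χ hχp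
  refine ⟨y.1, κ ≫ ν.1, hy, by rw [p₁.map_comp, hν, reassoc_of% hχc], ?_⟩
  exact (isStronglyCocartesian_of_comp Hκ (h2 κ Hκ)).comp
    (isStronglyCocartesian_of_isStronglyCocartesian_fiberFunctor p₁ p₂ h1 h2 h4 Hν)

end PaperFib
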